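/- Let λ ≥ 1 and let E be an L_{1,λ}-space. Let Z and X be real Banach spaces, let c ≥ 1, and let R : Z → X be a bounded linear operator with ‖R‖ ≤ 1 and ‖Rz‖ ≥ c⁻¹‖z‖ for all z ∈ Z. Then for every bounded linear operator V : E → Z* there exists a bounded linear operator Ṽ : E → X* with R*∘Ṽ = V and ‖Ṽ‖ ≤ λ·c·‖V‖, where R* : X* → Z* is the adjoint of R. -/

import Mathlib

open MeasureTheory NormedSpace
open scoped ENNReal

/-- The Banach–Mazur distance `d(Y,Z)`: the infimum of `‖T‖·‖T⁻¹‖` over all bounded linear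
isomorphisms `T : Y → Z` (`∞` if none exists). -/
noncomputable def BMdist (Y Z : Type*) [NormedAddCommGroup Y] [NormedSpace ℝ Y]
    [NormedAddCommGroup Z] [NormedSpace ℝ Z] : ℝ≥0∞ :=
  ⨅ T : Y ≃L[ℝ] Z, ENNReal.ofReal (‖(T : Y →L[ℝ] Z)‖ * ‖(T.symm : Z →L[ℝ] Y)‖)

/-- The adjoint `T* : Y* → X*` of a bounded linear operator `T : X → Y`,
given by `T* g = g ∘ T`. -/
noncomputable def adjointCLM {X Y : Type*} [NormedAddCommGroup X] [NormedSpace ℝ X]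
    [NormedAddCommGroup Y] [NormedSpace ℝ Y] (T : X →L[ℝ] Y) :
    StrongDual ℝ Y →L[ℝ] StrongDual ℝ X :=
  (ContinuousLinearMap.compL ℝ X Y ℝ).flip T

/-- `E` is an `L_{1,λ}`-space: every finite-dimensional subspace `G` of `E` is contained in
a finite-dimensional subspace `F` of `E` with `d(F, ℓ₁^{dim F}) ≤ λ`. -/
def IsL1LambdaSpace (lam : ℝ) (E : Type*) [NormedAddCommGroup E] [NormedSpace ℝ E] : Prop :=
  ∀ G : Submodule ℝ E, FiniteDimensional ℝ G →
    ∃ F : Submodule ℝ E, G ≤ F ∧ FiniteDimensional ℝ F ∧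
      BMdist F (PiLp 1 fun _ : Fin (Module.finrank ℝ F) => ℝ) ≤ ENNReal.ofReal lam

/-!
Since `R` is an isomorphism onto its range with inverse of norm at most `c`, Hahn–Banach lifts
every `u ∈ Z*` through `R*` to some `x ∈ X*` with `‖x‖ ≤ c‖u‖`. Lifting the images of the unit
vectors shows that every operator `ℓ₁ⁿ → Z*` lifts through `R*` with norm loss `c`, so `V`
restricted to a finite-dimensional `F ⊆ E` with `d(F, ℓ₁^{dim F}) < λ + ε` lifts with norm at
most `(λ + ε) c ‖V‖`. Every finite-dimensional subspace lies in such an `F`; the local lifts,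
extended linearly to `E`, have a pointwise (weak*) limit along an ultrafilter refining the net
of pairs (finite subset of `E`, `ε`), and that limit is the required `Ṽ`.
-/

open Filter Topology

theorem exists_adjointCLM_eq_of_norm_le_mul {Z X : Type*} [NormedAddCommGroup Z]
    [NormedSpace ℝ Z] [NormedAddCommGroup X] [NormedSpace ℝ X] (R : Z →L[ℝ] X) {c : ℝ}
    (hc : 0 ≤ c) (hR : ∀ z, ‖z‖ ≤ c * ‖R z‖) (u : StrongDual ℝ Z) :
    ∃ x : StrongDual ℝ X, adjointCLM R x = u ∧ ‖x‖ ≤ c * ‖u‖ := by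
  have hinj : Function.Injective (R : Z →ₗ[ℝ] X) :=
    (injective_iff_map_eq_zero _).2 fun z hz => norm_le_zero_iff.1 <| by
      simpa [show R z = 0 from hz] using hR z
  set e := LinearEquiv.ofInjective (R : Z →ₗ[ℝ] X) hinj
  have he : ∀ y, ((y : LinearMap.range (R : Z →ₗ[ℝ] X)) : X) = R (e.symm y) := fun y => by
    conv_lhs => rw [← e.apply_symm_apply y]
    rfl
  have hbound : ∀ y, ‖(u : Z →ₗ[ℝ] ℝ).comp (e.symm : _ →ₗ[ℝ] Z) y‖ ≤ c * ‖u‖ * ‖y‖ := fun y =>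
    calc ‖u (e.symm y)‖ ≤ ‖u‖ * ‖e.symm y‖ := u.le_opNorm _
      _ ≤ ‖u‖ * (c * ‖R (e.symm y)‖) := by gcongr; exact hR _
      _ = c * ‖u‖ * ‖y‖ := by rw [Submodule.coe_norm, he]; ring
  obtain ⟨x, hxu, hx⟩ := exists_extension_norm_eq _ (LinearMap.mkContinuous _ _ hbound)
  refine ⟨x, ContinuousLinearMap.ext fun z => ?_,
    hx ▸ LinearMap.mkContinuous_norm_le _ (by positivity) _⟩
  show x (R z) = u z
  simpa [e] using hxu (e z)

theorem exists_norm_mul_lt_of_BMdist_lt {Y Z : Type*} [NormedAddCommGroup Y] [NormedSpace ℝ Y]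
    [NormedAddCommGroup Z] [NormedSpace ℝ Z] {r : ℝ} (h : BMdist Y Z < ENNReal.ofReal r) :
    ∃ T : Y ≃L[ℝ] Z, ‖(T : Y →L[ℝ] Z)‖ * ‖(T.symm : Z →L[ℝ] Y)‖ < r := by
  obtain ⟨T, hT⟩ := iInf_lt_iff.1 h
  exact ⟨T, ((ENNReal.ofReal_lt_ofReal_iff'.1 hT).1)⟩

section Lifting

variable {Y W : Type*} [NormedAddCommGroup Y] [NormedSpace ℝ Y]
  [NormedAddCommGroup W] [NormedSpace ℝ W]

theorem exists_comp_eq_of_piLp_one {ι : Type*} [Fintype ι] (Q : Y →L[ℝ] W) {c : ℝ} (hc : 0 ≤ c)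
    (hQ : ∀ w, ∃ y, Q y = w ∧ ‖y‖ ≤ c * ‖w‖) (S : PiLp 1 (fun _ : ι => ℝ) →L[ℝ] W) :
    ∃ S' : PiLp 1 (fun _ : ι => ℝ) →L[ℝ] Y, Q ∘L S' = S ∧ ‖S'‖ ≤ c * ‖S‖ := by
  classical
  set b := PiLp.basisFun 1 ℝ ι
  choose y hQy hy using fun i => hQ (S (b i))
  have hb : ∀ i, ‖b i‖ = 1 := fun i => by simp [b, PiLp.basisFun_apply]
  have hbound : ∀ ξ, ‖b.constr ℝ y ξ‖ ≤ c * ‖S‖ * ‖ξ‖ := fun ξ =>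
    calc ‖b.constr ℝ y ξ‖ = ‖∑ i, ξ i • y i‖ := by simp [Module.Basis.constr_apply_fintype, b]
      _ ≤ ∑ i, ‖ξ i‖ * (c * ‖S‖) := by
        refine (norm_sum_le _ _).trans (Finset.sum_le_sum fun i _ => ?_)
        rw [norm_smul]
        gcongr
        calc ‖y i‖ ≤ c * ‖S (b i)‖ := hy i
          _ ≤ c * ‖S‖ := by gcongr; simpa [hb] using S.le_opNorm (b i)
      _ = c * ‖S‖ * ‖ξ‖ := by rw [PiLp.norm_eq_of_L1, ← Finset.sum_mul, mul_comm]
  refine ⟨(b.constr ℝ y).mkContinuous _ hbound, ?_,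
    LinearMap.mkContinuous_norm_le _ (by positivity) _⟩
  refine ContinuousLinearMap.coe_injective (b.ext fun i => ?_)
  simp [hQy]

theorem exists_comp_eq_of_equiv_piLp_one {ι F : Type*} [Fintype ι] [NormedAddCommGroup F]
    [NormedSpace ℝ F] (Q : Y →L[ℝ] W) {c : ℝ} (hc : 0 ≤ c)
    (hQ : ∀ w, ∃ y, Q y = w ∧ ‖y‖ ≤ c * ‖w‖) (T : F ≃L[ℝ] PiLp 1 (fun _ : ι => ℝ))
    (V : F →L[ℝ] W) :
    ∃ V' : F →L[ℝ] Y, Q ∘L V' = V ∧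
      ‖V'‖ ≤ ‖(T : F →L[ℝ] PiLp 1 (fun _ : ι => ℝ))‖ *
        ‖(T.symm : PiLp 1 (fun _ : ι => ℝ) →L[ℝ] F)‖ * c * ‖V‖ := by
  obtain ⟨S', hS', hS'_norm⟩ := exists_comp_eq_of_piLp_one Q hc hQ
    (V ∘L (T.symm : PiLp 1 (fun _ : ι => ℝ) →L[ℝ] F))
  refine ⟨S' ∘L (T : F →L[ℝ] _), ?_, ?_⟩
  · ext f
    simpa using congr($hS' (T f))
  · calc ‖S' ∘L (T : F →L[ℝ] PiLp 1 (fun _ : ι => ℝ))‖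
        ≤ ‖S'‖ * ‖(T : F →L[ℝ] PiLp 1 (fun _ : ι => ℝ))‖ := S'.opNorm_comp_le _
      _ ≤ c * (‖V‖ * ‖(T.symm : PiLp 1 (fun _ : ι => ℝ) →L[ℝ] F)‖) *
          ‖(T : F →L[ℝ] PiLp 1 (fun _ : ι => ℝ))‖ := by
        gcongr
        exact hS'_norm.trans (mul_le_mul_of_nonneg_left (V.opNorm_comp_le _) hc)
      _ = _ := by ring

theorem IsL1LambdaSpace.exists_linearMap_lift {E : Type*} [NormedAddCommGroup E]
    [NormedSpace ℝ E] {lam : ℝ} (hE : IsL1LambdaSpace lam E) (hlam : 0 ≤ lam)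
    (Q : Y →L[ℝ] W) {c : ℝ} (hc : 0 ≤ c) (hQ : ∀ w, ∃ y, Q y = w ∧ ‖y‖ ≤ c * ‖w‖)
    (V : E →L[ℝ] W) (G : Submodule ℝ E) [FiniteDimensional ℝ G] {ε : ℝ} (hε : 0 < ε) :
    ∃ g : E →ₗ[ℝ] Y, ∀ e ∈ G, Q (g e) = V e ∧ ‖g e‖ ≤ (lam + ε) * c * ‖V‖ * ‖e‖ := by
  obtain ⟨F, hGF, -, hF⟩ := hE G inferInstance
  obtain ⟨T, hT⟩ := exists_norm_mul_lt_of_BMdist_lt <| hF.trans_lt <|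
    (ENNReal.ofReal_lt_ofReal_iff (by linarith)).2 (lt_add_of_pos_right lam hε)
  obtain ⟨V', hV', hV'_norm⟩ := exists_comp_eq_of_equiv_piLp_one Q hc hQ T (V ∘L F.subtypeL)
  obtain ⟨g, hg⟩ := LinearMap.exists_extend (V' : F →ₗ[ℝ] Y)
  refine ⟨g, fun e he => ?_⟩
  have hge : g e = V' ⟨e, hGF he⟩ := LinearMap.congr_fun hg ⟨e, hGF he⟩
  refine ⟨by simpa [hge] using congr($hV' ⟨e, hGF he⟩), ?_⟩
  have hVF : ‖V ∘L F.subtypeL‖ ≤ ‖V‖ := calc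
    ‖V ∘L F.subtypeL‖ ≤ ‖V‖ * ‖F.subtypeL‖ := V.opNorm_comp_le _
    _ ≤ ‖V‖ := mul_le_of_le_one_right (norm_nonneg _) (Submodule.norm_subtypeL_le F)
  calc ‖g e‖ = ‖V' ⟨e, hGF he⟩‖ := by rw [hge]
    _ ≤ ‖V'‖ * ‖e‖ := V'.le_opNorm _
    _ ≤ (lam + ε) * c * ‖V‖ * ‖e‖ := by
      gcongr
      refine hV'_norm.trans ?_
      gcongr ?_ * c * ?_

end Lifting

theorem Ultrafilter.exists_clm_tendsto_apply_apply {ι E X : Type*} [NormedAddCommGroup E]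
    [NormedSpace ℝ E] [NormedAddCommGroup X] [NormedSpace ℝ X] (𝒰 : Ultrafilter ι)
    (g : ι → E →ₗ[ℝ] StrongDual ℝ X) {b : ι → ℝ} {C : ℝ} (hC : 0 ≤ C)
    (hb : Tendsto b 𝒰 (𝓝 C)) (hg : ∀ e, ∀ᶠ d in 𝒰, ‖g d e‖ ≤ b d * ‖e‖) :
    ∃ L : E →L[ℝ] StrongDual ℝ X, ‖L‖ ≤ C ∧
      ∀ e x, Tendsto (fun d => g d e x) 𝒰 (𝓝 (L e x)) := by
  have hbdd : ∀ e x, ∀ᶠ d in 𝒰, g d e x ∈ Metric.closedBall (0 : ℝ) ((C + 1) * ‖e‖ * ‖x‖) := by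
    intro e x
    filter_upwards [hg e, hb.eventually (gt_mem_nhds (lt_add_one C))] with d hd hbd
    rw [mem_closedBall_zero_iff]
    calc ‖g d e x‖ ≤ ‖g d e‖ * ‖x‖ := (g d e).le_opNorm x
      _ ≤ (C + 1) * ‖e‖ * ‖x‖ := by gcongr; exact hd.trans (by gcongr)
  choose L _ hL using fun e x =>
    (isCompact_closedBall (0 : ℝ) _).ultrafilter_le_nhds' (𝒰.map fun d => g d e x) (hbdd e x)
  replace hL : ∀ e x, Tendsto (fun d => g d e x) 𝒰 (𝓝 (L e x)) := hL
  let B : E →ₗ[ℝ] X →ₗ[ℝ] ℝ := LinearMap.mk₂ ℝ L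
    (fun e e' x => tendsto_nhds_unique (hL (e + e') x) (by simpa using (hL e x).add (hL e' x)))
    (fun a e x => tendsto_nhds_unique (hL (a • e) x) (by simpa using (hL e x).const_mul a))
    (fun e x x' => tendsto_nhds_unique (hL e (x + x')) (by simpa using (hL e x).add (hL e x')))
    (fun a e x => tendsto_nhds_unique (hL e (a • x)) (by simpa using (hL e x).const_mul a))
  have hB : ∀ e x, ‖B e x‖ ≤ C * ‖e‖ * ‖x‖ := fun e x =>
    le_of_tendsto_of_tendsto (hL e x).norm ((hb.mul_const _).mul_const _) <| by
      filter_upwards [hg e] with d hd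
      calc ‖g d e x‖ ≤ ‖g d e‖ * ‖x‖ := (g d e).le_opNorm x
        _ ≤ b d * ‖e‖ * ‖x‖ := by gcongr
  exact ⟨B.mkContinuous₂ C hB, LinearMap.mkContinuous₂_norm_le _ hC _, hL⟩

theorem stmt16_general (lam : ℝ) (hlam : 1 ≤ lam) (E : Type*) [NormedAddCommGroup E]
    [NormedSpace ℝ E] (hE : IsL1LambdaSpace lam E)
    (Z X : Type*) [NormedAddCommGroup Z] [NormedSpace ℝ Z]
    [NormedAddCommGroup X] [NormedSpace ℝ X]
    (c : ℝ) (hc : 1 ≤ c) (R : Z →L[ℝ] X)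
    (hRbelow : ∀ z : Z, c⁻¹ * ‖z‖ ≤ ‖R z‖)
    (V : E →L[ℝ] StrongDual ℝ Z) :
    ∃ Vt : E →L[ℝ] StrongDual ℝ X,
      (adjointCLM R).comp Vt = V ∧ ‖Vt‖ ≤ lam * c * ‖V‖ := by
  classical
  have hlift := exists_adjointCLM_eq_of_norm_le_mul R (by linarith)
    fun z => (inv_mul_le_iff₀ (by linarith)).1 (hRbelow z)
  choose g hg using fun d : Finset E × ℕ =>
    hE.exists_linearMap_lift (by linarith) _ (by linarith) hlift V
      (Submodule.span ℝ (d.1 : Set E)) (Nat.one_div_pos_of_nat (n := d.2))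
  set 𝒰 := Ultrafilter.of (atTop ×ˢ atTop : Filter (Finset E × ℕ))
  have h𝒰 : (𝒰 : Filter (Finset E × ℕ)) ≤ atTop ×ˢ atTop := Ultrafilter.of_le _
  have hspan : ∀ e, ∀ᶠ d : Finset E × ℕ in 𝒰, e ∈ Submodule.span ℝ (d.1 : Set E) := fun e =>
    h𝒰 <| (tendsto_fst.eventually (eventually_ge_atTop {e})).mono fun d hd =>
      Submodule.subset_span (hd (Finset.mem_singleton_self e))
  have hb : Tendsto (fun d : Finset E × ℕ => (lam + 1 / (d.2 + 1 : ℝ)) * c * ‖V‖) 𝒰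
      (𝓝 (lam * c * ‖V‖)) := by
    have := ((tendsto_one_div_add_atTop_nhds_zero_nat (𝕜 := ℝ)).comp tendsto_snd).mono_left h𝒰
    simpa using ((this.const_add lam).mul_const c).mul_const ‖V‖
  obtain ⟨Vt, hVt, hlim⟩ := 𝒰.exists_clm_tendsto_apply_apply g
    (mul_nonneg (mul_nonneg (by linarith) (by linarith)) (norm_nonneg V)) hb
    fun e => (hspan e).mono fun d hd => (hg d e hd).2
  refine ⟨Vt, ContinuousLinearMap.ext fun e => ContinuousLinearMap.ext fun z => ?_, hVt⟩
  refine tendsto_nhds_unique (hlim e (R z)) (tendsto_const_nhds.congr' ?_)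
  filter_upwards [hspan e] with d hd
  exact congr($((hg d e hd).1) z).symm

/-- Let `λ ≥ 1`, let `E` be an `L_{1,λ}`-space, let `Z, X` be real
Banach spaces, `c ≥ 1`, and let `R : Z → X` be a bounded linear operator with `‖R‖ ≤ 1`
and `‖Rz‖ ≥ c⁻¹‖z‖` for all `z`. Then every bounded linear operator `V : E → Z*` lifts
to a bounded linear operator `Ṽ : E → X*` with `R* ∘ Ṽ = V` and `‖Ṽ‖ ≤ λ·c·‖V‖`. -/
theorem stmt16 (lam : ℝ) (hlam : 1 ≤ lam) (E : Type*) [NormedAddCommGroup E]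
    [NormedSpace ℝ E] [CompleteSpace E] (hE : IsL1LambdaSpace lam E)
    (Z X : Type*) [NormedAddCommGroup Z] [NormedSpace ℝ Z] [CompleteSpace Z]
    [NormedAddCommGroup X] [NormedSpace ℝ X] [CompleteSpace X]
    (c : ℝ) (hc : 1 ≤ c) (R : Z →L[ℝ] X) (hR : ‖R‖ ≤ 1)
    (hRbelow : ∀ z : Z, c⁻¹ * ‖z‖ ≤ ‖R z‖)
    (V : E →L[ℝ] StrongDual ℝ Z) :
    ∃ Vt : E →L[ℝ] StrongDual ℝ X,
      (adjointCLM R).comp Vt = V ∧ ‖Vt‖ ≤ lam * c * ‖V‖ :=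
  stmt16_general lam hlam E hE Z X c hc R hRbelow V
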